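/- arXiv:1304.0053 — 5 statements merged into one kernel-verified Lean document; each statement's English description precedes it below -/
import Mathlib

section
/- Let the Wang B machine W_N encode a non-erasing Turing machine N as in Theorem 1, with Turing tape symbols encoded by 0 ↦ 10 and 1 ↦ 11 on the Wang tape, and an encoded configuration placing the Wang head on the left symbol of the encoded read symbol with instruction pointer 13i for current state q_i. If N in state q_i reading symbol σ applies the transition rule (q_i, σ, σ', D, q_j) to reach a new configuration, then W_N, started from the encoding of the first configuration, reaches the encoding of the second configuration in at most 8 steps. -/
inductive WInstr : Type
  | L : WInstr
  | R : WInstr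
  | M : WInstr
  | J : ℕ → WInstr
  deriving DecidableEq

/-- A configuration of a Wang B machine: instruction pointer, head position, tape. -/
structure WCfg : Type where
  ip : ℕ
  pos : ℤ
  tape : ℤ → Bool

/-- One step of a Wang B machine with program `P`.  If the instruction pointer has
passed beyond the last instruction the machine has halted and the step does nothing. -/
def wStep (P : List WInstr) (c : WCfg) : WCfg :=
  match P[c.ip]? with
  | none => c
  | some WInstr.L => ⟨c.ip + 1, c.pos - 1, c.tape⟩
  | some WInstr.R => ⟨c.ip + 1, c.pos + 1, c.tape⟩
  | some WInstr.M => ⟨c.ip + 1, c.pos, Function.update c.tape c.pos true⟩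
  | some (WInstr.J x) =>
      if c.tape c.pos then ⟨x, c.pos, c.tape⟩ else ⟨c.ip + 1, c.pos, c.tape⟩

/-- A configuration of a single-tape binary Turing machine (states are naturals). -/
structure TMCfg : Type where
  q : ℕ
  pos : ℤ
  tape : ℤ → Bool

/-- One step of the binary Turing machine with transition function `f`;
`f q r = some (w, d, q')` means: in state `q` reading `r`, write `w`, move right
if `d = true` (left if `d = false`), and enter state `q'`.  `f q r = none` means
the machine is halted. -/
def tmStep (f : ℕ → Bool → Option (Bool × Bool × ℕ)) (c : TMCfg) : TMCfg :=
  match f c.q (c.tape c.pos) with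
  | none => c
  | some (w, d, q') =>
      ⟨q', if d then c.pos + 1 else c.pos - 1, Function.update c.tape c.pos w⟩

/-- A binary Turing machine is non-erasing if no rule overwrites 1 with 0. -/
def NonErasing (f : ℕ → Bool → Option (Bool × Bool × ℕ)) : Prop :=
  ∀ q d q', f q true ≠ some (false, d, q')

/-- The machine is halted in configuration `c`. -/
def TMHalted (f : ℕ → Bool → Option (Bool × Bool × ℕ)) (c : TMCfg) : Prop :=
  f c.q (c.tape c.pos) = none

/-- Equation (2): the instruction sequence `⟨TR_{q_i,0}⟩` encoding the transition rule
for reading 0 (direction `true` is right, `false` is left). -/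
def encTR0 (r : Option (Bool × Bool × ℕ)) : List WInstr :=
  match r with
  | some (false, true, j)  => [WInstr.R, WInstr.M, WInstr.M, WInstr.M, WInstr.M, WInstr.J (13 * j)]
  | some (false, false, j) => [WInstr.L, WInstr.L, WInstr.L, WInstr.M, WInstr.M, WInstr.J (13 * j)]
  | some (true, true, j)   => [WInstr.M, WInstr.R, WInstr.M, WInstr.M, WInstr.M, WInstr.J (13 * j)]
  | some (true, false, j)  => [WInstr.M, WInstr.L, WInstr.L, WInstr.L, WInstr.M, WInstr.J (13 * j)]
  | none => [WInstr.M, WInstr.M, WInstr.M, WInstr.M, WInstr.M, WInstr.M]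

/-- Equation (3): the instruction sequence `⟨TR_{q_i,1}⟩` encoding the transition rule
for reading 1 (non-erasing, so the written symbol is again 1). -/
def encTR1 (r : Option (Bool × Bool × ℕ)) : List WInstr :=
  match r with
  | some (_, true, j)  => [WInstr.R, WInstr.M, WInstr.M, WInstr.M, WInstr.J (13 * j)]
  | some (_, false, j) => [WInstr.L, WInstr.L, WInstr.L, WInstr.M, WInstr.J (13 * j)]
  | none => [WInstr.M, WInstr.M, WInstr.M, WInstr.M, WInstr.M]

/-- Equation (1): the Wang B machine `W_N` encoding the non-erasing Turing machine
with `m` states (halt state `m - 1`) and transition function `f`. -/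
def wangOf (m : ℕ) (f : ℕ → Bool → Option (Bool × Bool × ℕ)) : List WInstr :=
  ((List.range (m - 1)).map (fun i =>
    [WInstr.R, WInstr.J (13 * i + 8)] ++ encTR0 (f i false) ++ encTR1 (f i true))).flatten
    ++ [WInstr.M]

/-- The Wang tape `w` encodes the Turing tape `t`: Turing cell `k` is represented by the
pair of Wang cells `2k, 2k+1`, holding `10` if `t k = 0` and `11` if `t k = 1`;
still-blank pairs `00` (converted on demand during the simulation) may only represent 0. -/
def EncTape (t w : ℤ → Bool) : Prop :=
  ∀ k : ℤ, (w (2 * k) = true ∧ w (2 * k + 1) = t k) ∨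
    (w (2 * k) = false ∧ w (2 * k + 1) = false ∧ t k = false)

/-- The Wang configuration `wc` encodes the Turing configuration `c`: instruction pointer
`13 i` for current state `q_i`, head on the left symbol of the encoded read symbol
(which must already be marked), tape encoded as in `EncTape`. -/
def Encodes (wc : WCfg) (c : TMCfg) : Prop :=
  wc.ip = 13 * c.q ∧ wc.pos = 2 * c.pos ∧ wc.tape (2 * c.pos) = true ∧
    EncTape c.tape wc.tape

/-!
The block of `W_N` for state `q_i` sits at addresses `13i, …, 13i + 12`. Its first two
instructions `R, J(13i+8)` move onto the right cell of the encoded read symbol and jump to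
`⟨TR_{q_i,1}⟩` exactly when that cell is `1`, i.e. when the symbol read is `1`; otherwise they
fall through to `⟨TR_{q_i,0}⟩`. That straight-line code writes the right cell if a `1` is to be
written over a `0`, moves to the left cell of the neighbouring pair and marks it (turning a blank
`00` into `10`); its final jump is then taken and lands on `13j`. Marking left cells never changes
the encoded Turing tape, and since `N` is non-erasing, reading `1` never requires a write. This
takes `2 + 6` steps after reading `0` and `2 + 5` after reading `1`.
-/

open Function

theorem List.cons_prefix_drop_iff {α : Type*} {x : α} {l P : List α} {a : ℕ} :
    x :: l <+: P.drop a ↔ P[a]? = some x ∧ l <+: P.drop (a + 1) := by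
  have hhead : P[a]? = (P.drop a)[0]? := by simp
  rw [hhead, ← List.drop_drop]
  rcases P.drop a with _ | ⟨y, rest⟩ <;> simp [eq_comm]

theorem List.IsPrefix.drop_of_append {α : Type*} {l₁ l₂ L : List α} (h : l₁ ++ l₂ <+: L) :
    l₂ <+: L.drop l₁.length := by
  simpa using h.drop l₁.length

def wangBlock (f : ℕ → Bool → Option (Bool × Bool × ℕ)) (i : ℕ) : List WInstr :=
  [WInstr.R, WInstr.J (13 * i + 8)] ++ encTR0 (f i false) ++ encTR1 (f i true)

section Layout

variable {m : ℕ} {f : ℕ → Bool → Option (Bool × Bool × ℕ)} {i : ℕ}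

theorem encTR0_length (r : Option (Bool × Bool × ℕ)) : (encTR0 r).length = 6 := by
  rcases r with _ | ⟨_ | _, _ | _, _⟩ <;> rfl

theorem encTR1_length (r : Option (Bool × Bool × ℕ)) : (encTR1 r).length = 5 := by
  rcases r with _ | ⟨_, _ | _, _⟩ <;> rfl

theorem wangBlock_length (f : ℕ → Bool → Option (Bool × Bool × ℕ)) (i : ℕ) :
    (wangBlock f i).length = 13 := by
  simp [wangBlock, encTR0_length, encTR1_length]

theorem length_flatten_map_wangBlock (f : ℕ → Bool → Option (Bool × Bool × ℕ)) (n : ℕ) :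
    ((List.range n).map (wangBlock f)).flatten.length = 13 * n := by
  simp [List.length_flatten, Function.comp_def, wangBlock_length, mul_comm]

theorem wangBlock_prefix_drop_flatten {n : ℕ} (hi : i < n) :
    wangBlock f i <+: ((List.range n).map (wangBlock f)).flatten.drop (13 * i) := by
  induction n with
  | zero => omega
  | succ n ih =>
    rw [List.range_succ, List.map_append, List.flatten_append]
    rcases Nat.lt_succ_iff_lt_or_eq.mp hi with hi | rfl
    · rw [List.drop_append_of_le_length (by rw [length_flatten_map_wangBlock]; omega)]
      exact (ih hi).trans (List.prefix_append _ _)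
    · rw [List.drop_left' (length_flatten_map_wangBlock f i)]
      simp

theorem wangOf_eq :
    wangOf m f = ((List.range (m - 1)).map (wangBlock f)).flatten ++ [WInstr.M] :=
  rfl

theorem wangBlock_prefix_drop_wangOf (hi : i < m - 1) :
    wangBlock f i <+: (wangOf m f).drop (13 * i) := by
  refine (wangBlock_prefix_drop_flatten hi).trans ?_
  rw [wangOf_eq, List.drop_append_of_le_length (by rw [length_flatten_map_wangBlock]; omega)]
  exact List.prefix_append _ _

theorem dispatch_prefix_drop_wangOf (hi : i < m - 1) :
    [WInstr.R, WInstr.J (13 * i + 8)] <+: (wangOf m f).drop (13 * i) :=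
  (List.prefix_append _ _).trans
    ((List.prefix_append _ _).trans (wangBlock_prefix_drop_wangOf hi))

theorem encTR0_prefix_drop_wangOf (hi : i < m - 1) :
    encTR0 (f i false) <+: (wangOf m f).drop (13 * i + 2) := by
  simpa using ((List.prefix_append _ _).trans (wangBlock_prefix_drop_wangOf hi)).drop_of_append

theorem encTR1_prefix_drop_wangOf (hi : i < m - 1) :
    encTR1 (f i true) <+: (wangOf m f).drop (13 * i + 8) := by
  simpa [encTR0_length] using (wangBlock_prefix_drop_wangOf (f := f) hi).drop_of_append

section Run

variable {P : List WInstr} {a : ℕ} {x : ℤ} {w : ℤ → Bool}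

theorem wStep_iterate_dispatch {b : ℕ} (hP : [WInstr.R, WInstr.J b] <+: P.drop a) :
    (wStep P)^[2] ⟨a, x, w⟩ = ⟨if w (x + 1) then b else a + 2, x + 1, w⟩ := by
  simp only [List.cons_prefix_drop_iff, List.nil_prefix, and_true] at hP
  cases hw : w (x + 1) <;> simp [iterate_succ_apply, wStep, hP, hw]

theorem wStep_iterate_encTR0 {σ' D : Bool} {j : ℕ}
    (hP : encTR0 (some (σ', D, j)) <+: P.drop a) :
    (wStep P)^[6] ⟨a, x, w⟩ =
      ⟨13 * j, if D then x + 1 else x - 3,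
        update (if σ' then update w x true else w) (if D then x + 1 else x - 3) true⟩ := by
  cases σ' <;> cases D <;>
    simp only [encTR0, List.cons_prefix_drop_iff, List.nil_prefix, and_true] at hP <;>
    simp [iterate_succ_apply, wStep, hP, update_idem, sub_sub]

theorem wStep_iterate_encTR1 {σ' D : Bool} {j : ℕ}
    (hP : encTR1 (some (σ', D, j)) <+: P.drop a) :
    (wStep P)^[5] ⟨a, x, w⟩ =
      ⟨13 * j, if D then x + 1 else x - 3, update w (if D then x + 1 else x - 3) true⟩ := by
  cases D <;> simp only [encTR1, List.cons_prefix_drop_iff, List.nil_prefix, and_true] at hP <;>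
    simp [iterate_succ_apply, wStep, hP, update_idem, sub_sub]

end Run

namespace EncTape

variable {t w : ℤ → Bool}

theorem read (h : EncTape t w) {k : ℤ} (hk : w (2 * k) = true) : w (2 * k + 1) = t k := by
  rcases h k with ⟨-, h1⟩ | ⟨h0, -⟩
  · exact h1
  · simp [hk] at h0

theorem mark_even (h : EncTape t w) (k : ℤ) : EncTape t (update w (2 * k) true) := by
  intro l
  rcases eq_or_ne l k with rfl | hl
  · left
    rw [update_self, update_of_ne (by omega)]
    rcases h l with ⟨-, h1⟩ | ⟨-, h1, ht⟩
    · exact ⟨rfl, h1⟩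
    · exact ⟨rfl, h1.trans ht.symm⟩
  · rw [update_of_ne (by omega), update_of_ne (by omega)]
    exact h l

theorem write_true (h : EncTape t w) {k : ℤ} (hk : w (2 * k) = true) :
    EncTape (update t k true) (update w (2 * k + 1) true) := by
  intro l
  rcases eq_or_ne l k with rfl | hl
  · left
    rw [update_of_ne (by omega), update_self, update_self]
    exact ⟨hk, rfl⟩
  · rw [update_of_ne (by omega), update_of_ne (by omega), update_of_ne hl]
    exact h l

theorem write_of_eq_false (h : EncTape t w) {k : ℤ} (hk : w (2 * k) = true) (ht : t k = false)
    (b : Bool) : EncTape (update t k b) (if b then update w (2 * k + 1) true else w) := by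
  cases b
  · rwa [if_neg Bool.false_ne_true, ← ht, update_eq_self]
  · exact h.write_true hk

theorem encodes_mark (h : EncTape t w) (j : ℕ) {p x : ℤ} (hx : x = 2 * p) :
    Encodes ⟨13 * j, x, update w x true⟩ ⟨j, p, t⟩ := by
  subst hx
  exact ⟨rfl, rfl, update_self .., h.mark_even p⟩

end EncTape

theorem tmStep_of_eq_some {f : ℕ → Bool → Option (Bool × Bool × ℕ)} {c : TMCfg} {σ' D : Bool}
    {j : ℕ} (h : f c.q (c.tape c.pos) = some (σ', D, j)) :
    tmStep f c = ⟨j, if D then c.pos + 1 else c.pos - 1, update c.tape c.pos σ'⟩ := by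
  simp [tmStep, h]

theorem ite_add_one_sub_three_eq_two_mul (D : Bool) (p : ℤ) :
    (if D then 2 * p + 1 + 1 else 2 * p + 1 - 3) = 2 * (if D then p + 1 else p - 1) := by
  cases D <;> simp <;> ring

section Simulation

variable {m : ℕ} {f : ℕ → Bool → Option (Bool × Bool × ℕ)} {c : TMCfg} {wc : WCfg}
  {σ' D : Bool} {j : ℕ}

theorem encodes_iterate_wStep_of_read_false (hq : c.q < m - 1) (hσ : c.tape c.pos = false)
    (hr : f c.q false = some (σ', D, j)) (henc : Encodes wc c) :
    Encodes ((wStep (wangOf m f))^[8] wc) (tmStep f c) := by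
  obtain ⟨ip, x, w⟩ := wc
  obtain ⟨rfl, rfl, hmark, htape⟩ : ip = 13 * c.q ∧ x = 2 * c.pos ∧ _ := henc
  have hread : w (2 * c.pos + 1) = false := (htape.read hmark).trans hσ
  have hcode := encTR0_prefix_drop_wangOf (f := f) hq
  rw [hr] at hcode
  rw [tmStep_of_eq_some (by rwa [hσ]), show 8 = 6 + 2 from rfl, iterate_add_apply,
    wStep_iterate_dispatch (dispatch_prefix_drop_wangOf hq), hread, if_neg Bool.false_ne_true,
    wStep_iterate_encTR0 hcode]
  exact (htape.write_of_eq_false hmark hσ σ').encodes_mark j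
    (ite_add_one_sub_three_eq_two_mul D c.pos)

theorem encodes_iterate_wStep_of_read_true (hf : NonErasing f) (hq : c.q < m - 1)
    (hσ : c.tape c.pos = true) (hr : f c.q true = some (σ', D, j)) (henc : Encodes wc c) :
    Encodes ((wStep (wangOf m f))^[7] wc) (tmStep f c) := by
  obtain ⟨ip, x, w⟩ := wc
  obtain ⟨rfl, rfl, hmark, htape⟩ : ip = 13 * c.q ∧ x = 2 * c.pos ∧ _ := henc
  have hread : w (2 * c.pos + 1) = true := (htape.read hmark).trans hσ
  obtain rfl : σ' = true := by
    cases σ'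
    · exact absurd hr (hf c.q D j)
    · rfl
  have hcode := encTR1_prefix_drop_wangOf (f := f) hq
  rw [hr] at hcode
  have hkeep : update c.tape c.pos true = c.tape := update_eq_self_iff.mpr hσ.symm
  rw [tmStep_of_eq_some (by rwa [hσ]), hkeep, show 7 = 5 + 2 from rfl, iterate_add_apply,
    wStep_iterate_dispatch (dispatch_prefix_drop_wangOf hq), hread, if_pos rfl,
    wStep_iterate_encTR1 hcode]
  exact htape.encodes_mark j (ite_add_one_sub_three_eq_two_mul D c.pos)

end Simulation

/-- If the non-erasing machine `N` in state `q_i` reading `σ` applies the rule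
`(q_i, σ, σ', D, q_j)`, then the Wang B machine `W_N`, started from the encoding of the
configuration, reaches the encoding of the successor configuration in at most 8 steps. -/
theorem stmt5 (m : ℕ) (f : ℕ → Bool → Option (Bool × Bool × ℕ)) (hf : NonErasing f)
    (c : TMCfg) (hq : c.q < m - 1) (σ' D : Bool) (j : ℕ)
    (hr : f c.q (c.tape c.pos) = some (σ', D, j))
    (wc : WCfg) (henc : Encodes wc c) :
    ∃ s ≤ 8, Encodes ((wStep (wangOf m f))^[s] wc) (tmStep f c) := by
  cases hσ : c.tape c.pos
  · exact ⟨8, le_rfl, encodes_iterate_wStep_of_read_false hq hσ (hσ ▸ hr) henc⟩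
  · exact ⟨7, by norm_num, encodes_iterate_wStep_of_read_true hf hq hσ (hσ ▸ hr) henc⟩
end Layout
end

section
/- In the encoding of jump instructions for Hasenjaeger's machine, with a Wang B machine program of n instructions encoded on a circular tape as ⟨I_0⟩⟨I_1⟩...⟨I_{n-1}⟩⟨J(n)⟩, where ⟨M⟩ = 1, ⟨R⟩ = 01, ⟨L⟩ = 001, and ⟨J(x)⟩ = 000 0^y 1 with y = k−x if x ≤ k and y = n+1+k−x if x > k (for a jump J(x) at program position k), the following holds: starting from the first bit of ⟨I_k⟩ and moving left on the circular encoded program until the symbol 1 has been read exactly y+1 times, then moving right two cells, the head lands on the first bit of ⟨I_x⟩. -/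
/-!
Every block contains exactly one `1`, at its end. Hence an initial segment of the tape that ends
at a block boundary contains as many `1`s as blocks, and the cell just before a block boundary
holds a `1`. Unroll the circle once, i.e. read `T ++ T`, the tape of the block sequence
`B 0, …, B n, B 0, …, B n`. The start of `⟨I_k⟩` becomes the boundary after block `n + 1 + k`, and
`⟨I_x⟩` starts at the boundary after block `X`, where `X = n + 1 + x` if `x ≤ k` and `X = x`
otherwise. The scan to the left reads its last `1` in the final cell of block `X - 1`, after
`(n + 1 + k) - (X - 1) = y + 1` ones; the cell right after it, reached by the final two moves,
starts block `X`, which is `⟨I_x⟩` modulo the tape length.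
-/

open Finset

lemma count_true_take_add (W : List Bool) (m j : ℕ) :
    (W.take (m + j)).count true
      = (W.take m).count true + #{i ∈ range j | W.getD (m + i) false = true} := by
  induction j with
  | zero => simp
  | succ j ih =>
    rw [← add_assoc, List.take_add_one, List.count_append, ih, card_filter, card_filter,
      sum_range_succ, List.getD_eq_getElem?_getD]
    cases W[m + j]? with
    | none => simp
    | some b => cases b <;> simp [add_assoc]

lemma card_filter_scan_left (W : List Bool) (m j : ℕ) :
    #{i ∈ range j | W.getD (m + j - 1 - i) false = true} + (W.take m).count true
      = (W.take (m + j)).count true := by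
  rw [count_true_take_add, add_comm, card_filter, card_filter,
    ← sum_range_reflect (fun i => if W.getD (m + i) false = true then 1 else 0)]
  refine congrArg _ (sum_congr rfl fun i hi => ?_)
  have : m + j - 1 - i = m + (j - 1 - i) := by have := mem_range.mp hi; omega
  rw [this]

lemma getD_emod_length_eq_getD_append_self (T : List Bool) {s i : ℕ} (hs : s ≤ T.length)
    (hi : i < T.length + s) :
    T.getD (((s : ℤ) - 1 - i) % T.length).toNat false
      = (T ++ T).getD (T.length + s - 1 - i) false := by
  have hcast : ((s : ℤ) - 1 - i) % T.length = ((T.length + s - 1 - i : ℕ) : ℤ) % T.length := by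
    rw [← Int.sub_emod_right ((T.length + s - 1 - i : ℕ) : ℤ)]
    congr 1
    omega
  rw [hcast, ← Int.natCast_mod, Int.toNat_natCast]
  rcases lt_or_ge (T.length + s - 1 - i) T.length with h | h
  · rw [Nat.mod_eq_of_lt h, List.getD_append _ _ _ _ h]
  · rw [List.getD_append_right _ _ _ _ h, Nat.mod_eq_sub_mod h, Nat.mod_eq_of_lt (by omega)]

lemma List.IsPrefix.getD_length_sub_one {l W : List Bool} (h : l <+: W)
    (hl : l.getLast? = some true) : W.getD (l.length - 1) false = true := by
  obtain ⟨r, rfl⟩ := h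
  have hne : l ≠ [] := by rintro rfl; simp at hl
  rw [List.getD_append _ _ _ _ (by simpa [List.length_pos_iff] using hne),
    List.getD_eq_getElem?_getD, ← List.getLast?_eq_getElem?, hl, Option.getD_some]

lemma List.IsPrefix.count_true_take_length_sub_one {l W : List Bool} (h : l <+: W)
    (hl : l.getLast? = some true) : (W.take (l.length - 1)).count true + 1 = l.count true := by
  obtain ⟨r, rfl⟩ := h
  rw [List.take_append_of_le_length (Nat.sub_le _ _), ← List.dropLast_eq_take]
  conv_rhs => rw [← List.dropLast_append_getLast? true hl]
  simp

lemma cyclic_scan_left (T : List Bool) {s e c : ℕ} (hs : s ≤ T.length) (he : 1 ≤ e)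
    (hes : e ≤ T.length + s) (hone : (T ++ T).getD (e - 1) false = true)
    (hc : c + ((T ++ T).take (e - 1)).count true = ((T ++ T).take (T.length + s)).count true) :
    ∃ j : ℕ,
      #{i ∈ range (j + 1) | T.getD (((s : ℤ) - 1 - (i : ℕ)) % T.length).toNat false = true} = c ∧
      T.getD (((s : ℤ) - 1 - j) % T.length).toNat false = true ∧
      ((s : ℤ) - 1 - j - 1 + 2) % T.length = (e : ℤ) % T.length := by
  refine ⟨T.length + s - e, ?_, ?_, ?_⟩
  · have hscan := card_filter_scan_left (T ++ T) (e - 1) (T.length + s - e + 1)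
    rw [show e - 1 + (T.length + s - e + 1) = T.length + s by omega] at hscan
    rw [← hscan] at hc
    refine (congrArg card (filter_congr fun i hi => ?_)).trans (Nat.add_right_cancel hc).symm
    rw [getD_emod_length_eq_getD_append_self T hs (by have := mem_range.mp hi; omega)]
  · rw [getD_emod_length_eq_getD_append_self T hs (by omega), ← hone]
    congr 1
    omega
  · rw [← Int.sub_emod_right (e : ℤ)]
    congr 1
    omega

def blockPrefix {α : Type*} (D : ℕ → List α) (m : ℕ) : List α := ((List.range m).map D).flatten

section Blocks

variable {α : Type*}

lemma blockPrefix_add (D : ℕ → List α) (a b : ℕ) :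
    blockPrefix D (a + b) = blockPrefix D a ++ blockPrefix (fun i => D (a + i)) b := by
  simp [blockPrefix, List.range_add, Function.comp_def]

lemma blockPrefix_succ (D : ℕ → List α) (m : ℕ) :
    blockPrefix D (m + 1) = blockPrefix D m ++ D m := by
  simp [blockPrefix, List.range_succ]

lemma blockPrefix_isPrefix (D : ℕ → List α) {a b : ℕ} (h : a ≤ b) :
    blockPrefix D a <+: blockPrefix D b := by
  obtain ⟨c, rfl⟩ := Nat.exists_eq_add_of_le h
  rw [blockPrefix_add]
  exact List.prefix_append _ _

lemma blockPrefix_congr {D D' : ℕ → List α} {m : ℕ} (h : ∀ i < m, D i = D' i) :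
    blockPrefix D m = blockPrefix D' m := by
  unfold blockPrefix
  rw [List.map_congr_left fun i hi => h i (List.mem_range.mp hi)]

lemma count_true_blockPrefix {D : ℕ → List Bool} {m : ℕ} (h : ∀ i < m, (D i).count true = 1) :
    (blockPrefix D m).count true = m := by
  induction m with
  | zero => simp [blockPrefix]
  | succ m ih =>
    rw [blockPrefix_succ, List.count_append, ih fun i hi => h i (by omega), h m (by omega)]

lemma getLast?_blockPrefix_succ {D : ℕ → List Bool} {m : ℕ} (h : (D m).getLast? = some true) :
    (blockPrefix D (m + 1)).getLast? = some true := by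
  rw [blockPrefix_succ, List.getLast?_append, h, Option.some_or]

lemma blockPrefix_mod_of_le (B : ℕ → List α) {n m : ℕ} (hm : m ≤ n + 1) :
    blockPrefix (fun i => B (i % (n + 1))) m = blockPrefix B m :=
  blockPrefix_congr fun i hi => by simp only [Nat.mod_eq_of_lt (hi.trans_le hm)]

lemma blockPrefix_mod_add_of_le (B : ℕ → List α) {n m : ℕ} (hm : m ≤ n + 1) :
    blockPrefix (fun i => B (i % (n + 1))) (n + 1 + m)
      = blockPrefix B (n + 1) ++ blockPrefix B m := by
  rw [blockPrefix_add, blockPrefix_mod_of_le B le_rfl, ← blockPrefix_mod_of_le B hm]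
  exact congrArg _ (blockPrefix_congr fun i _ => by simp)

end Blocks

/-- Hasenjaeger's relative-addressing scan on the circular program tape.  The encoded
program consists of `n + 1` blocks `⟨I_0⟩, …, ⟨I_{n-1}⟩, ⟨J(n)⟩`, each a binary word
containing exactly one `1`, as its last symbol.  For a jump `J(x)` at program position
`k`, with offset `y = k − x` if `x ≤ k` and `y = n + 1 + k − x` otherwise: scanning left
on the circular tape from just before the first bit of `⟨I_k⟩` until the symbol `1` has
been read exactly `y + 1` times (the head ending one cell left of that `1`), and then
moving right two cells, the head lands on the first bit of `⟨I_x⟩`. -/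
theorem stmt9 (n : ℕ) (B : ℕ → List Bool)
    (hB : ∀ i ≤ n, (B i).count true = 1 ∧ (B i).getLast? = some true)
    (k x : ℕ) (hk : k ≤ n) (hx : x ≤ n) :
    ∃ j : ℕ,
      ((Finset.range (j + 1)).filter (fun i : ℕ =>
          (((List.range (n + 1)).map B).flatten).getD
            (((((((List.range k).map B).flatten).length : ℤ) - 1 - (i : ℤ)) %
              ((((List.range (n + 1)).map B).flatten).length : ℤ)).toNat) false = true)).card
        = (if x ≤ k then k - x else n + 1 + k - x) + 1 ∧
      (((List.range (n + 1)).map B).flatten).getD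
          (((((((List.range k).map B).flatten).length : ℤ) - 1 - (j : ℤ)) %
            ((((List.range (n + 1)).map B).flatten).length : ℤ)).toNat) false = true ∧
      (((((List.range k).map B).flatten).length : ℤ) - 1 - (j : ℤ) - 1 + 2) %
          ((((List.range (n + 1)).map B).flatten).length : ℤ)
        = ((((List.range x).map B).flatten).length : ℤ) %
          ((((List.range (n + 1)).map B).flatten).length : ℤ) := by
  simp only [← blockPrefix.eq_1]
  set T := blockPrefix B (n + 1)
  set D : ℕ → List Bool := fun i => B (i % (n + 1))
  have hD : ∀ i, (D i).count true = 1 ∧ (D i).getLast? = some true := fun i =>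
    hB _ (Nat.lt_succ_iff.mp (Nat.mod_lt _ n.succ_pos))
  have hunroll : ∀ m ≤ n + 1, blockPrefix D (n + 1 + m) = T ++ blockPrefix B m := fun m hm =>
    blockPrefix_mod_add_of_le B hm
  have hpre : ∀ m ≤ n + 1 + (n + 1), blockPrefix D m <+: T ++ T := fun m hm =>
    hunroll _ le_rfl ▸ blockPrefix_isPrefix D hm
  set X := if x ≤ k then n + 1 + x else x with hX
  have hXk : X ≤ n + 1 + k := by split_ifs at hX <;> omega
  have hlast : (blockPrefix D X).getLast? = some true := by
    obtain ⟨X', hX'⟩ : ∃ X', X = X' + 1 := ⟨X - 1, by split_ifs at hX <;> omega⟩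
    rw [hX']
    exact getLast?_blockPrefix_succ (hD X').2
  have hstart : (blockPrefix D (n + 1 + k)).length = T.length + (blockPrefix B k).length := by
    rw [hunroll k (by omega), List.length_append]
  obtain ⟨j, hcard, hread, hland⟩ := cyclic_scan_left T
    (s := (blockPrefix B k).length) (e := (blockPrefix D X).length)
    (c := (if x ≤ k then k - x else n + 1 + k - x) + 1)
    (blockPrefix_isPrefix B (by omega)).length_le
    (List.length_pos_iff.mpr fun h => by simp [h] at hlast)
    (hstart ▸ (blockPrefix_isPrefix D hXk).length_le)
    ((hpre X (by omega)).getD_length_sub_one hlast)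
    (by
      have hones := (hpre X (by omega)).count_true_take_length_sub_one hlast
      rw [← hstart, ← List.prefix_iff_eq_take.mp (hpre _ (by omega))]
      simp only [count_true_blockPrefix fun i _ => (hD i).1] at hones ⊢
      split_ifs at hX ⊢ <;> omega)
  refine ⟨j, hcard, hread, hland.trans ?_⟩
  split_ifs at hX with h
  · rw [hX, hunroll x (by omega), List.length_append, Nat.cast_add, Int.add_emod_left]
  · rw [hX, blockPrefix_mod_of_le B (by omega : x ≤ n + 1)]
end

section
/- Hasenjaeger's machine H (a 4-state three-tape machine with the 14 transition rules of Table 1) simulates a single Wang B machine instruction M in exactly 1 step, R in exactly 2 steps, L in exactly 3 steps, and a jump instruction J(x) in O(n^2) steps, where n is the number of instructions of the simulated Wang B machine; hence for a fixed Wang B machine W running in time t, H simulates W in O(t) steps. -/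
/-- The jump offset of Equation (7): `y = k − x` if `x ≤ k`, else `y = n + 1 + k − x`. -/
def jumpOffset (n k x : ℕ) : ℕ := if x ≤ k then k - x else n + 1 + k - x

/-- Encoding of a Wang B machine instruction at program position `k` (program of `n`
instructions): `⟨M⟩ = 1`, `⟨R⟩ = 01`, `⟨L⟩ = 001`, `⟨J(x)⟩ = 000·0^y·1`. -/
def encInstr (n k : ℕ) : WInstr → List Bool
  | WInstr.M => [true]
  | WInstr.R => [false, true]
  | WInstr.L => [false, false, true]
  | WInstr.J x => List.replicate (3 + jumpOffset n k x) false ++ [true]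

/-- The encoded program `⟨W⟩ = ⟨I_0⟩⟨I_1⟩…⟨I_{n-1}⟩⟨J(n)⟩` placed on the circular
program tape `P` (a trailing self-jump `⟨J(n)⟩` is appended). -/
def encProg (W : List WInstr) : List Bool :=
  ((List.range W.length).map (fun k => encInstr W.length k (W.getD k WInstr.M))).flatten
    ++ encInstr W.length W.length (WInstr.J W.length)

/-- Index on the program tape of the first bit of the encoding of instruction `k`. -/
def pStart (W : List WInstr) (k : ℕ) : ℕ :=
  (((List.range k).map (fun k' => encInstr W.length k' (W.getD k' WInstr.M))).flatten).length

/-- A configuration of Hasenjaeger's three-tape machine: state (one of four), head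
positions on the circular program tape `P`, the circular counter tape `C`, and the
bi-infinite non-erasing work tape `W`, plus the contents of the work tape. -/
structure HCfg : Type where
  state : Fin 4
  pP : ℤ
  pC : ℤ
  pW : ℤ
  tapeW : ℤ → Bool

/-- Reading the circular program tape. -/
def readP (P : List Bool) (z : ℤ) : Bool := P.getD (z % (P.length : ℤ)).toNat false

/-- Reading the circular counter tape of length `n + 2`, all `1`s except a single `0`. -/
def readC (n : ℕ) (z : ℤ) : Bool := decide (z % ((n : ℤ) + 2) ≠ 0)

/-- One step of Hasenjaeger's machine, implementing the 14 transition rules of Table 1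
(states `q1,…,q4` are `0,…,3`). -/
def hStep (P : List Bool) (n : ℕ) (c : HCfg) : HCfg :=
  let p := readP P c.pP
  let cc := readC n c.pC
  let w := c.tapeW c.pW
  if c.state = 0 then
    if p then
      if w then ⟨0, c.pP + 1, c.pC, c.pW, c.tapeW⟩                                -- rule 2
      else ⟨0, c.pP + 1, c.pC, c.pW, Function.update c.tapeW c.pW true⟩           -- rule 1
    else ⟨1, c.pP + 1, c.pC, c.pW, c.tapeW⟩                                       -- rule 3
  else if c.state = 1 then
    if cc then
      if p then ⟨0, c.pP + 1, c.pC - 1, c.pW - 1, c.tapeW⟩                        -- rule 6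
      else ⟨2, c.pP + 1, c.pC - 1, c.pW, c.tapeW⟩                                 -- rule 7
    else
      if p then ⟨0, c.pP + 1, c.pC, c.pW + 1, c.tapeW⟩                            -- rule 4
      else ⟨1, c.pP + 1, c.pC + 1, c.pW, c.tapeW⟩                                 -- rule 5
  else if c.state = 2 then
    if w then
      if p then ⟨3, c.pP - 1, c.pC + 1, c.pW, c.tapeW⟩                            -- rule 11
      else ⟨2, c.pP + 1, c.pC + 1, c.pW, c.tapeW⟩                                 -- rule 10
    else
      if p then ⟨0, c.pP + 1, c.pC, c.pW, c.tapeW⟩                                -- rule 9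
      else ⟨2, c.pP + 1, c.pC, c.pW, c.tapeW⟩                                     -- rule 8
  else
    if cc then
      if p then ⟨3, c.pP - 1, c.pC - 1, c.pW, c.tapeW⟩                            -- rule 13
      else ⟨3, c.pP - 1, c.pC, c.pW, c.tapeW⟩                                     -- rule 12
    else ⟨0, c.pP + 1, c.pC, c.pW, c.tapeW⟩                                       -- rule 14

/-- Hasenjaeger's configuration `hc` encodes the Wang B machine configuration `wc`:
state `q1`, `P`-head on the first bit of the current encoded instruction, `C`-head on
the unique `0` of the counter tape, and work tape identical to the Wang tape. -/
def HEnc (W : List WInstr) (wc : WCfg) (hc : HCfg) : Prop :=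
  hc.state = 0 ∧
  hc.pP % ((encProg W).length : ℤ) = (pStart W wc.ip : ℤ) ∧
  hc.pC % ((W.length : ℤ) + 2) = 0 ∧
  hc.pW = wc.pos ∧ hc.tapeW = wc.tape

/-!
The encoded program is a cyclic word of blocks `0^z 1`, one per instruction, and the offset of
the `C`-head from the unique `0` of the counter tape is a counter modulo `n + 2`. `M`, `R` and `L`
are told apart by the number of zeros before their `1` and take 1, 2 and 3 steps. The block of
`J(x)` at position `k` has `3 + y` zeros, `y` being the cyclic distance from `x` back to `k`; the
machine counts the last `y` of them on `C` only when the work cell is marked. If it is unmarked,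
the next block is entered. If it is marked, the machine walks back along the program tape,
decrementing the counter at every block end it passes, and when the counter hits `0`, after
`y + 1` block ends, it steps forward onto the start of block `x`. A block has at most `n + 4`
cells, so a jump costs `O(n²)` steps and `t` steps of the Wang machine cost `O(t)` steps.
-/

namespace Hasenjaeger

open Function

/-! ### Layout of the program tape -/

def encZeros (n k : ℕ) : WInstr → ℕ
  | .M => 0
  | .R => 1
  | .L => 2
  | .J x => 3 + jumpOffset n k x

lemma encInstr_eq_replicate (n k : ℕ) (I : WInstr) :
    encInstr n k I = List.replicate (encZeros n k I) false ++ [true] := by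
  cases I <;> rfl

/-- Index `W.length` holds the `J(n)` appended by `encProg`. -/
def progInstr (W : List WInstr) (k : ℕ) : WInstr := W.getD k (.J W.length)

def block (W : List WInstr) (k : ℕ) : List Bool := encInstr W.length k (progInstr W k)

def blockZeros (W : List WInstr) (k : ℕ) : ℕ := encZeros W.length k (progInstr W k)

def blockStart (W : List WInstr) (k : ℕ) : ℕ := ((List.range k).map (block W)).flatten.length

variable {W : List WInstr} {k : ℕ}

lemma block_eq_replicate : block W k = List.replicate (blockZeros W k) false ++ [true] :=
  encInstr_eq_replicate _ _ _

lemma blockStart_succ : blockStart W (k + 1) = blockStart W k + blockZeros W k + 1 := by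
  simp [blockStart, List.range_succ, block_eq_replicate, add_assoc]

lemma blockStart_mono : Monotone (blockStart W) :=
  monotone_nat_of_le_succ fun k => by rw [blockStart_succ]; omega

lemma progInstr_of_lt (hk : k < W.length) (I : WInstr) : progInstr W k = W.getD k I := by
  rw [progInstr, List.getD_eq_getElem _ _ hk, List.getD_eq_getElem _ _ hk]

lemma encProg_eq_flatten : encProg W = ((List.range (W.length + 1)).map (block W)).flatten := by
  rw [List.range_succ, List.map_append, List.flatten_append]
  unfold encProg
  congr 1
  · refine congrArg _ (List.map_congr_left fun k hk => ?_)
    rw [block, progInstr_of_lt (List.mem_range.mp hk) .M]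
  · simp [block, progInstr]

lemma length_encProg : (encProg W).length = blockStart W (W.length + 1) := by
  rw [encProg_eq_flatten, blockStart]

lemma pStart_eq_blockStart (hk : k ≤ W.length) : pStart W k = blockStart W k := by
  unfold pStart blockStart
  congr 2
  refine List.map_congr_left fun j hj => ?_
  rw [block, progInstr_of_lt ((List.mem_range.mp hj).trans_le hk) .M]

lemma getD_encProg (hk : k ≤ W.length) {j : ℕ} (hj : j < (block W k).length) :
    (encProg W).getD (blockStart W k + j) false = (block W k).getD j false := by
  obtain ⟨m, hm⟩ : ∃ m, W.length + 1 = k + (m + 1) := ⟨W.length - k, by omega⟩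
  rw [encProg_eq_flatten, hm, List.range_add, List.map_append, List.flatten_append,
    List.getD_append_right _ _ _ _ (by simp [blockStart]), List.range_succ_eq_map]
  simp only [blockStart, Nat.add_sub_cancel_left, List.map_cons, List.map_map,
    List.flatten_cons, add_zero]
  exact List.getD_append _ _ _ _ hj

lemma blockStart_add_lt (hk : k ≤ W.length) {j : ℕ} (hj : j ≤ blockZeros W k) :
    blockStart W k + j < (encProg W).length := by
  have := blockStart_mono (W := W) (show k + 1 ≤ W.length + 1 by omega)
  rw [blockStart_succ] at this
  rw [length_encProg]; omega

lemma readP_of_modEq {P : List Bool} {a : ℤ} {m : ℕ} (hm : m < P.length)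
    (ha : a ≡ m [ZMOD P.length]) : readP P a = P.getD m false := by
  rw [readP, ha.eq, Int.emod_eq_of_lt (by positivity) (by exact_mod_cast hm)]
  rfl

lemma readP_encProg (hk : k ≤ W.length) {j : ℕ} (hj : j ≤ blockZeros W k) {a : ℤ}
    (ha : a ≡ blockStart W k + j [ZMOD (encProg W).length]) :
    readP (encProg W) a = decide (j = blockZeros W k) := by
  rw [readP_of_modEq (blockStart_add_lt hk hj) (by exact_mod_cast ha),
    getD_encProg hk (by simpa [block_eq_replicate] using Nat.lt_succ_of_le hj), block_eq_replicate]
  rcases hj.lt_or_eq with hj | rfl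
  · rw [List.getD_append _ _ _ _ (by simpa using hj)]
    simp [hj, hj.ne]
  · rw [List.getD_append_right _ _ _ _ (by simp)]
    simp

lemma readP_encProg_of_lt_blockZeros (hk : k ≤ W.length) {j : ℕ} (hj : j < blockZeros W k) {a : ℤ}
    (ha : a ≡ blockStart W k + j [ZMOD (encProg W).length]) : readP (encProg W) a = false := by
  simpa [hj.ne] using readP_encProg hk hj.le ha

lemma readP_encProg_blockZeros (hk : k ≤ W.length) {a : ℤ}
    (ha : a ≡ blockStart W k + blockZeros W k [ZMOD (encProg W).length]) :
    readP (encProg W) a = true := by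
  simpa using readP_encProg hk le_rfl ha

lemma readC_of_modEq_zero {n : ℕ} {c : ℤ} (h : c ≡ 0 [ZMOD n + 2]) : readC n c = false := by
  simp [readC, h.eq]

lemma readC_of_modEq_pos {n d : ℕ} {c : ℤ} (h : c ≡ d [ZMOD n + 2]) (hd0 : 0 < d)
    (hd : d < n + 2) : readC n c = true := by
  rw [readC, h.eq, Int.emod_eq_of_lt (by positivity) (by omega)]
  simpa using hd0.ne'

/-! ### The transition rules of Table 1 -/

section Rules

variable {P : List Bool} {n : ℕ} {a c p : ℤ} {t : ℤ → Bool}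

lemma hStep_rule1_2 (hP : readP P a = true) :
    hStep P n ⟨0, a, c, p, t⟩ = ⟨0, a + 1, c, p, update t p true⟩ := by
  cases ht : t p <;> simp [hStep, hP, ht]

lemma hStep_rule3 (hP : readP P a = false) : hStep P n ⟨0, a, c, p, t⟩ = ⟨1, a + 1, c, p, t⟩ := by
  simp [hStep, hP]

lemma hStep_rule4 (hC : readC n c = false) (hP : readP P a = true) :
    hStep P n ⟨1, a, c, p, t⟩ = ⟨0, a + 1, c, p + 1, t⟩ := by
  simp [hStep, hC, hP]

lemma hStep_rule5 (hC : readC n c = false) (hP : readP P a = false) :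
    hStep P n ⟨1, a, c, p, t⟩ = ⟨1, a + 1, c + 1, p, t⟩ := by
  simp [hStep, hC, hP]

lemma hStep_rule6 (hC : readC n c = true) (hP : readP P a = true) :
    hStep P n ⟨1, a, c, p, t⟩ = ⟨0, a + 1, c - 1, p - 1, t⟩ := by
  simp [hStep, hC, hP]

lemma hStep_rule7 (hC : readC n c = true) (hP : readP P a = false) :
    hStep P n ⟨1, a, c, p, t⟩ = ⟨2, a + 1, c - 1, p, t⟩ := by
  simp [hStep, hC, hP]

lemma hStep_rule8_10 (hP : readP P a = false) :
    hStep P n ⟨2, a, c, p, t⟩ = ⟨2, a + 1, if t p then c + 1 else c, p, t⟩ := by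
  cases ht : t p <;> simp [hStep, hP, ht]

lemma hStep_rule9 (ht : t p = false) (hP : readP P a = true) :
    hStep P n ⟨2, a, c, p, t⟩ = ⟨0, a + 1, c, p, t⟩ := by
  simp [hStep, ht, hP]

lemma hStep_rule11 (ht : t p = true) (hP : readP P a = true) :
    hStep P n ⟨2, a, c, p, t⟩ = ⟨3, a - 1, c + 1, p, t⟩ := by
  simp [hStep, ht, hP]

lemma hStep_rule12 (hC : readC n c = true) (hP : readP P a = false) :
    hStep P n ⟨3, a, c, p, t⟩ = ⟨3, a - 1, c, p, t⟩ := by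
  simp [hStep, hC, hP]

lemma hStep_rule13 (hC : readC n c = true) (hP : readP P a = true) :
    hStep P n ⟨3, a, c, p, t⟩ = ⟨3, a - 1, c - 1, p, t⟩ := by
  simp [hStep, hC, hP]

lemma hStep_rule14 (hC : readC n c = false) : hStep P n ⟨3, a, c, p, t⟩ = ⟨0, a + 1, c, p, t⟩ := by
  simp [hStep, hC]

lemma iterate_hStep_scan_forward (m : ℕ) (hP : ∀ j < m, readP P (a + j) = false) :
    (hStep P n)^[m] ⟨2, a, c, p, t⟩ = ⟨2, a + m, if t p then c + m else c, p, t⟩ := by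
  induction m generalizing a c with
  | zero => simp
  | succ m ih =>
    rw [iterate_succ_apply, hStep_rule8_10 (by simpa using hP 0 (by omega)),
      ih fun j hj => by convert hP (j + 1) (by omega) using 2; push_cast; ring]
    congr 1
    · push_cast; ring
    · split_ifs <;> push_cast <;> ring

lemma iterate_hStep_scan_back (m : ℕ) (hC : readC n c = true)
    (hP : ∀ j < m, readP P (a - j) = false) :
    (hStep P n)^[m] ⟨3, a, c, p, t⟩ = ⟨3, a - m, c, p, t⟩ := by
  induction m generalizing a with
  | zero => simp
  | succ m ih =>
    rw [iterate_succ_apply, hStep_rule12 hC (by simpa using hP 0 (by omega)),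
      ih fun j hj => by convert hP (j + 1) (by omega) using 2; push_cast; ring]
    congr 1; push_cast; ring

end Rules

/-! ### Simulation of the instructions -/

lemma hEnc_iff {wc : WCfg} (hip : wc.ip ≤ W.length) {q : Fin 4} {a c p : ℤ} {t : ℤ → Bool} :
    HEnc W wc ⟨q, a, c, p, t⟩ ↔ q = 0 ∧ a ≡ blockStart W wc.ip [ZMOD (encProg W).length] ∧
      c ≡ 0 [ZMOD W.length + 2] ∧ p = wc.pos ∧ t = wc.tape := by
  have hlt : (blockStart W wc.ip : ℤ) < (encProg W).length := by
    exact_mod_cast blockStart_add_lt hip (Nat.zero_le _)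
  simp only [HEnc, pStart_eq_blockStart hip, Int.ModEq, Int.emod_eq_of_lt (by positivity) hlt,
    Int.zero_emod]

lemma lt_length_and_gap_eq {I : WInstr} (hI : W[k]? = some I) :
    k < W.length ∧ blockZeros W k = encZeros W.length k I := by
  obtain ⟨hk, rfl⟩ := List.getElem?_eq_some_iff.mp hI
  exact ⟨hk, by rw [blockZeros, progInstr, List.getD_eq_getElem _ _ hk]⟩

theorem hEnc_iterate_hStep_M {wc : WCfg} {hc : HCfg} (hI : W[wc.ip]? = some .M)
    (h : HEnc W wc hc) : HEnc W (wStep W wc) ((hStep (encProg W) W.length)^[1] hc) := by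
  obtain ⟨hk, hgap⟩ := lt_length_and_gap_eq hI
  obtain ⟨q, a, c, p, t⟩ := hc
  obtain ⟨rfl, ha, hc, rfl, rfl⟩ := (hEnc_iff hk.le).mp h
  have h0 : readP (encProg W) a = true :=
    readP_encProg_blockZeros hk.le (by simpa [hgap, encZeros] using ha)
  simp only [wStep, hI]
  rw [iterate_one, hStep_rule1_2 h0, hEnc_iff (by dsimp only; omega)]
  exact ⟨rfl, by simpa [blockStart_succ, hgap, encZeros] using ha.add_right 1, hc, rfl, rfl⟩

theorem hEnc_iterate_hStep_R {wc : WCfg} {hc : HCfg} (hI : W[wc.ip]? = some .R)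
    (h : HEnc W wc hc) : HEnc W (wStep W wc) ((hStep (encProg W) W.length)^[2] hc) := by
  obtain ⟨hk, hgap⟩ := lt_length_and_gap_eq hI
  obtain ⟨q, a, c, p, t⟩ := hc
  obtain ⟨rfl, ha, hc, rfl, rfl⟩ := (hEnc_iff hk.le).mp h
  have h0 : readP (encProg W) a = false :=
    readP_encProg_of_lt_blockZeros hk.le (j := 0) (by simp [hgap, encZeros]) (by simpa using ha)
  have h1 : readP (encProg W) (a + 1) = true :=
    readP_encProg_blockZeros hk.le (by simpa [hgap, encZeros] using ha.add_right 1)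
  simp only [wStep, hI]
  rw [iterate_succ_apply, iterate_one, hStep_rule3 h0, hStep_rule4 (readC_of_modEq_zero hc) h1,
    hEnc_iff (by dsimp only; omega)]
  refine ⟨rfl, ?_, hc, rfl, rfl⟩
  simpa [blockStart_succ, hgap, encZeros, add_assoc] using ha.add_right 2

theorem hEnc_iterate_hStep_L {wc : WCfg} {hc : HCfg} (hI : W[wc.ip]? = some .L)
    (h : HEnc W wc hc) : HEnc W (wStep W wc) ((hStep (encProg W) W.length)^[3] hc) := by
  obtain ⟨hk, hgap⟩ := lt_length_and_gap_eq hI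
  obtain ⟨q, a, c, p, t⟩ := hc
  obtain ⟨rfl, ha, hc, rfl, rfl⟩ := (hEnc_iff hk.le).mp h
  have h0 : readP (encProg W) a = false :=
    readP_encProg_of_lt_blockZeros hk.le (j := 0) (by simp [hgap, encZeros]) (by simpa using ha)
  have h1 : readP (encProg W) (a + 1) = false :=
    readP_encProg_of_lt_blockZeros hk.le (j := 1) (by simp [hgap, encZeros])
      (by simpa using ha.add_right 1)
  have h2 : readP (encProg W) (a + 1 + 1) = true :=
    readP_encProg_blockZeros hk.le (by simpa [hgap, encZeros, add_assoc] using ha.add_right 2)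
  have hc1 : readC W.length (c + 1) = true :=
    readC_of_modEq_pos (d := 1) (by simpa using hc.add_right 1) one_pos (by omega)
  simp only [wStep, hI]
  rw [iterate_succ_apply, iterate_succ_apply, iterate_one, hStep_rule3 h0,
    hStep_rule5 (readC_of_modEq_zero hc) h1, hStep_rule6 hc1 h2, hEnc_iff (by dsimp only; omega)]
  refine ⟨rfl, ?_, by simpa using hc, rfl, rfl⟩
  simpa [blockStart_succ, hgap, encZeros, add_assoc] using ha.add_right 3

lemma jumpOffset_le {n x : ℕ} (hk : k ≤ n) : jumpOffset n k x ≤ n := by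
  unfold jumpOffset; split_ifs <;> omega

lemma blockZeros_le (hk : k ≤ W.length) : blockZeros W k ≤ W.length + 3 := by
  unfold blockZeros
  cases progInstr W k with
  | J x => simpa [encZeros, add_comm] using jumpOffset_le (x := x) hk
  | _ => simp [encZeros]

def cycPred (n k : ℕ) : ℕ := if k = 0 then n else k - 1

lemma cycPred_le {n : ℕ} (hk : k ≤ n) : cycPred n k ≤ n := by
  unfold cycPred; split_ifs <;> omega

lemma iterate_cycPred_of_le {n j : ℕ} (h : j ≤ k) : (cycPred n)^[j] k = k - j := by
  induction j with
  | zero => rfl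
  | succ j ih => rw [iterate_succ_apply', ih (by omega), cycPred, if_neg (by omega)]; omega

lemma iterate_cycPred_jumpOffset {n x : ℕ} (hx : x ≤ n) :
    (cycPred n)^[jumpOffset n k x] k = x := by
  unfold jumpOffset
  split_ifs with hxk
  · rw [iterate_cycPred_of_le (by omega)]
    omega
  · rw [show n + 1 + k - x = (n - x) + (k + 1) by omega, iterate_add_apply, iterate_succ_apply',
      iterate_cycPred_of_le le_rfl, Nat.sub_self, cycPred, if_pos rfl,
      iterate_cycPred_of_le (by omega)]
    omega

lemma blockStart_sub_one_modEq :
    (blockStart W k : ℤ) - 1 ≡ blockStart W (cycPred W.length k) + blockZeros W (cycPred W.length k)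
      [ZMOD (encProg W).length] := by
  unfold cycPred
  split_ifs with h
  · refine Int.modEq_iff_dvd.mpr ⟨1, ?_⟩
    rw [h, length_encProg, blockStart_succ]
    simp [blockStart]
  · have := blockStart_succ (W := W) (k := k - 1)
    rw [Nat.sub_add_cancel (by omega)] at this
    rw [this]
    simp

lemma iterate_hStep_leave_block (hk : k ≤ W.length) {d : ℕ} (hd : d ≤ W.length) {a c p : ℤ}
    {t : ℤ → Bool} (ha : a ≡ blockStart W k + blockZeros W k - 1 [ZMOD (encProg W).length])
    (hc : c ≡ d + 1 [ZMOD W.length + 2]) :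
    (hStep (encProg W) W.length)^[blockZeros W k + 1] ⟨3, a, c, p, t⟩ =
        ⟨3, a - blockZeros W k - 1, c - 1, p, t⟩ ∧
      a - blockZeros W k - 1 ≡
        blockStart W (cycPred W.length k) + blockZeros W (cycPred W.length k) - 1
          [ZMOD (encProg W).length] ∧
      c - 1 ≡ d [ZMOD W.length + 2] := by
  have hC : readC W.length c = true :=
    readC_of_modEq_pos (d := d + 1) (by exact_mod_cast hc) d.succ_pos (by omega)
  have hend : a - blockZeros W k ≡
      blockStart W (cycPred W.length k) + blockZeros W (cycPred W.length k)
        [ZMOD (encProg W).length] :=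
    Int.ModEq.trans (by convert ha.sub_right (blockZeros W k : ℤ) using 1; ring)
      blockStart_sub_one_modEq
  have hscan := iterate_hStep_scan_back (P := encProg W) (p := p) (t := t) (blockZeros W k) hC
    fun j hj => readP_encProg_of_lt_blockZeros (j := blockZeros W k - 1 - j) hk (by omega) <| by
      convert ha.sub_right (j : ℤ) using 1
      push_cast [Nat.cast_sub (show j ≤ blockZeros W k - 1 by omega),
        Nat.cast_sub (show 1 ≤ blockZeros W k by omega)]
      ring
  refine ⟨?_, hend.sub_right 1, by simpa using hc.sub_right 1⟩
  rw [iterate_succ_apply', hscan, hStep_rule13 hC (readP_encProg_blockZeros (cycPred_le hk) hend)]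

/-- The backward walk of a taken jump. -/
lemma iterate_hStep_return {d : ℕ} (hd : d ≤ W.length) (hk : k ≤ W.length) {a c p : ℤ}
    {t : ℤ → Bool} (ht : t p = true)
    (ha : a ≡ blockStart W k + blockZeros W k - 1 [ZMOD (encProg W).length])
    (hc : c ≡ d + 1 [ZMOD W.length + 2]) :
    ∃ s ≤ (d + 1) * (W.length + 4) + 2, ∃ a' c' : ℤ,
      (hStep (encProg W) W.length)^[s] ⟨3, a, c, p, t⟩ = ⟨0, a', c', p, t⟩ ∧
      a' ≡ blockStart W ((cycPred W.length)^[d] k) [ZMOD (encProg W).length] ∧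
      c' ≡ 0 [ZMOD W.length + 2] := by
  induction d generalizing k a c with
  | zero =>
    obtain ⟨hleave, ha', hc'⟩ := iterate_hStep_leave_block (p := p) (t := t) hk hd ha hc
    have h0 : readP (encProg W) (a - blockZeros W k - 1 + 1) = true :=
      readP_encProg_blockZeros (cycPred_le hk) (by simpa using ha'.add_right 1)
    refine ⟨blockZeros W k + 3, by have := blockZeros_le hk; omega,
      a - blockZeros W k - 1 + 1 + 1, c - 1, ?_, ?_, hc'⟩
    · rw [show blockZeros W k + 3 = 2 + (blockZeros W k + 1) by ring, iterate_add_apply, hleave,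
        iterate_succ_apply, iterate_one, hStep_rule14 (readC_of_modEq_zero hc'),
        hStep_rule1_2 h0, update_eq_self_iff.mpr ht.symm]
    · rw [iterate_zero_apply]
      convert ha.add_right (1 - blockZeros W k : ℤ) using 1 <;> ring
  | succ d ih =>
    obtain ⟨hleave, ha', hc'⟩ := iterate_hStep_leave_block (p := p) (t := t) hk hd ha hc
    obtain ⟨s, hs, a', c', hrun, ha'', hc''⟩ := ih (by omega) (cycPred_le hk) ha' hc'
    refine ⟨s + (blockZeros W k + 1), by have := blockZeros_le hk; nlinarith, a', c', ?_,
      by rwa [iterate_succ_apply], hc''⟩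
    rw [iterate_add_apply, hleave, hrun]

lemma iterate_hStep_decode_jump (hk : k ≤ W.length) {y : ℕ} (hgap : blockZeros W k = 3 + y)
    {a c p : ℤ} {t : ℤ → Bool} (ha : a ≡ blockStart W k [ZMOD (encProg W).length])
    (hc : c ≡ 0 [ZMOD W.length + 2]) :
    (hStep (encProg W) W.length)^[y + 4] ⟨0, a, c, p, t⟩ =
      if t p then ⟨3, a + 3 + y - 1, c + y + 1, p, t⟩ else ⟨0, a + 3 + y + 1, c, p, t⟩ := by
  have hP : ∀ j : ℕ, j < 3 + y → readP (encProg W) (a + j) = false := fun j hj =>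
    readP_encProg_of_lt_blockZeros hk (hgap ▸ hj) (ha.add_right j)
  have h1 : readP (encProg W) (a + 3 + y) = true :=
    readP_encProg_blockZeros hk <| by
      convert ha.add_right (3 + y : ℤ) using 1 <;> push_cast [hgap] <;> ring
  have h3 : (hStep (encProg W) W.length)^[3] ⟨0, a, c, p, t⟩ = ⟨2, a + 3, c, p, t⟩ := by
    rw [iterate_succ_apply, iterate_succ_apply, iterate_one,
      hStep_rule3 (by simpa using hP 0 (by omega)),
      hStep_rule5 (readC_of_modEq_zero hc) (by simpa using hP 1 (by omega)),
      hStep_rule7 (readC_of_modEq_pos (d := 1) (by simpa using hc.add_right 1) one_pos (by omega))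
        (by convert hP 2 (by omega) using 2; push_cast; ring)]
    congr 1 <;> ring
  have hscan := iterate_hStep_scan_forward (P := encProg W) (n := W.length) (a := a + 3) (c := c)
    (p := p) (t := t) y fun j hj => by convert hP (3 + j) (by omega) using 2; push_cast; ring
  rw [show y + 4 = 1 + y + 3 by ring, iterate_add_apply, iterate_add_apply, h3, hscan,
    iterate_one]
  cases ht : t p
  · simpa using hStep_rule9 ht h1
  · simpa [add_assoc] using hStep_rule11 (n := W.length) (c := c + y) ht h1

theorem hEnc_iterate_hStep_J {x : ℕ} (hx : x ≤ W.length) {wc : WCfg} {hc : HCfg}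
    (hI : W[wc.ip]? = some (.J x)) (h : HEnc W wc hc) :
    ∃ s ≤ 3 * (W.length + 2) ^ 2, HEnc W (wStep W wc) ((hStep (encProg W) W.length)^[s] hc) := by
  obtain ⟨hk, hgap⟩ := lt_length_and_gap_eq hI
  set y := jumpOffset W.length wc.ip x
  replace hgap : blockZeros W wc.ip = 3 + y := hgap
  have hy : y ≤ W.length := jumpOffset_le hk.le
  obtain ⟨q, a, c, p, t⟩ := hc
  obtain ⟨rfl, ha, hc, rfl, rfl⟩ := (hEnc_iff hk.le).mp h
  have hdecode := iterate_hStep_decode_jump (p := wc.pos) (t := wc.tape) hk.le hgap ha hc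
  cases ht : wc.tape wc.pos <;> simp only [ht, if_true, if_false, Bool.false_eq_true] at hdecode
  · refine ⟨y + 4, by nlinarith, ?_⟩
    simp only [wStep, hI, ht, hdecode, if_false, Bool.false_eq_true]
    refine (hEnc_iff (by dsimp only; omega)).mpr ⟨rfl, ?_, hc, rfl, rfl⟩
    convert ha.add_right (4 + y : ℤ) using 1 <;>
      push_cast [blockStart_succ, hgap, encZeros] <;> ring
  · obtain ⟨s, hs, a', c', hrun, ha', hc'⟩ :=
      iterate_hStep_return (a := a + 3 + y - 1) (c := c + y + 1) hy hk.le ht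
      (by convert ha.add_right (2 + y : ℤ) using 1 <;> push_cast [hgap] <;> ring)
      (by convert hc.add_right ((y : ℤ) + 1) using 1 <;> ring)
    refine ⟨s + (y + 4), by nlinarith, ?_⟩
    rw [iterate_add_apply, hdecode, hrun]
    simp only [wStep, hI, ht, if_true]
    exact (hEnc_iff hx).mpr ⟨rfl, by rwa [iterate_cycPred_jumpOffset hx] at ha', hc', rfl, rfl⟩

/-! ### Whole runs -/

theorem hEnc_iterate_hStep_wStep (hW : ∀ x, WInstr.J x ∈ W → x ≤ W.length) {wc : WCfg}
    {hc : HCfg} (h : HEnc W wc hc) :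
    ∃ s ≤ 3 * (W.length + 2) ^ 2, HEnc W (wStep W wc) ((hStep (encProg W) W.length)^[s] hc) := by
  have hbound : 3 ≤ 3 * (W.length + 2) ^ 2 := Nat.le_mul_of_pos_right 3 (by positivity)
  cases hI : W[wc.ip]? with
  | none => exact ⟨0, by omega, by simpa [wStep, hI] using h⟩
  | some I =>
    cases I with
    | M => exact ⟨1, by omega, hEnc_iterate_hStep_M hI h⟩
    | R => exact ⟨2, by omega, hEnc_iterate_hStep_R hI h⟩
    | L => exact ⟨3, hbound, hEnc_iterate_hStep_L hI h⟩
    | J x => exact hEnc_iterate_hStep_J (hW x (List.mem_of_getElem? hI)) hI h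

lemma wStep_ip_le (hW : ∀ x, WInstr.J x ∈ W → x ≤ W.length) {wc : WCfg}
    (h : wc.ip ≤ W.length) : (wStep W wc).ip ≤ W.length := by
  cases hI : W[wc.ip]? with
  | none => simpa [wStep, hI] using h
  | some I =>
    have hk := (List.getElem?_eq_some_iff.mp hI).1
    cases I <;> simp only [wStep, hI] <;> try omega
    split
    · exact hW _ (List.mem_of_getElem? hI)
    · dsimp only; omega

theorem hEnc_iterate_hStep_iterate_wStep (hW : ∀ x, WInstr.J x ∈ W → x ≤ W.length) (t : ℕ)
    {wc : WCfg} {hc : HCfg} (hip : wc.ip ≤ W.length) (h : HEnc W wc hc) :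
    ∃ s ≤ 3 * (W.length + 2) ^ 2 * t,
      HEnc W ((wStep W)^[t] wc) ((hStep (encProg W) W.length)^[s] hc) := by
  induction t generalizing wc hc with
  | zero => exact ⟨0, le_rfl, h⟩
  | succ t ih =>
    obtain ⟨s₁, hs₁, h₁⟩ := hEnc_iterate_hStep_wStep hW h
    obtain ⟨s₂, hs₂, h₂⟩ := ih (wStep_ip_le hW hip) h₁
    refine ⟨s₂ + s₁, by rw [mul_add_one]; omega, ?_⟩
    rwa [iterate_succ_apply, iterate_add_apply]

end Hasenjaeger

/-- Hasenjaeger's 4-state machine simulates a single Wang B machine instruction `M` in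
exactly 1 step, `R` in exactly 2 steps, `L` in exactly 3 steps, and `J(x)` in
`O(n²)` steps where `n` is the number of instructions of the simulated Wang B
machine; hence, for a fixed Wang B machine running in time `t`, it simulates the whole
computation in `O(t)` steps. -/
theorem stmt11 (W : List WInstr) (hW : ∀ x, WInstr.J x ∈ W → x ≤ W.length) :
    (∀ (wc : WCfg) (hc : HCfg), W[wc.ip]? = some WInstr.M → HEnc W wc hc →
      HEnc W (wStep W wc) ((hStep (encProg W) W.length)^[1] hc)) ∧
    (∀ (wc : WCfg) (hc : HCfg), W[wc.ip]? = some WInstr.R → HEnc W wc hc →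
      HEnc W (wStep W wc) ((hStep (encProg W) W.length)^[2] hc)) ∧
    (∀ (wc : WCfg) (hc : HCfg), W[wc.ip]? = some WInstr.L → HEnc W wc hc →
      HEnc W (wStep W wc) ((hStep (encProg W) W.length)^[3] hc)) ∧
    (∃ c : ℕ, ∀ (x : ℕ) (wc : WCfg) (hc : HCfg),
      W[wc.ip]? = some (WInstr.J x) → HEnc W wc hc →
      ∃ s ≤ c * (W.length + 2) ^ 2,
        HEnc W (wStep W wc) ((hStep (encProg W) W.length)^[s] hc)) ∧
    (∃ c : ℕ, ∀ (wc : WCfg) (hc : HCfg) (t : ℕ), wc.ip ≤ W.length → HEnc W wc hc →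
      ∃ s ≤ c * t + c,
        HEnc W ((wStep W)^[t] wc) ((hStep (encProg W) W.length)^[s] hc)) := by
  refine ⟨fun _ _ => Hasenjaeger.hEnc_iterate_hStep_M, fun _ _ => Hasenjaeger.hEnc_iterate_hStep_R,
    fun _ _ => Hasenjaeger.hEnc_iterate_hStep_L,
    ⟨3, fun x _ _ hI => Hasenjaeger.hEnc_iterate_hStep_J (hW x (List.mem_of_getElem? hI)) hI⟩,
    ⟨3 * (W.length + 2) ^ 2, fun _ _ t hip h => ?_⟩⟩
  obtain ⟨s, hs, h'⟩ := Hasenjaeger.hEnc_iterate_hStep_iterate_wStep hW t hip h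
  exact ⟨s, by omega, h'⟩
end

section
/- When Hasenjaeger's machine H reaches the configuration encoding the halting of the simulated Wang B machine — state q1, program tape head on the first bit of the final encoded instruction ⟨J(n)⟩ = 0001 (at position n in the encoded program), counter head on the 0 of C, and work-tape head reading 1 — then after exactly 10 steps H returns to the same configuration; hence H enters an infinite loop with unchanged tape contents. -/
/-! The self-jump `⟨J(n)⟩ = 0001` has offset `0`. From state `q1` the machine reads its three
`0`s (rules 3, 5, 7, the counter head stepping onto and off the `1` after its `0`), finds the work
tape bit `1` together with the closing `1` (rule 11), and walks back over the `0`s (rule 12, three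
times) to the `1` before them (rule 13): every instruction encoding ends in `1`, and on the
circular program tape the bit before the last instruction is the end of the previous one or of the
program itself. Rules 14 and 2 restore state `q1` at the first bit of `⟨J(n)⟩`, with the counter
head back on its `0` and nothing written. -/

theorem readP_of_modEq {P : List Bool} {z : ℤ} {k : ℕ} (hk : k < P.length)
    (hz : z ≡ k [ZMOD P.length]) : readP P z = P.getD k false := by
  rw [readP, hz, Int.emod_eq_of_lt (by omega) (by omega), Int.toNat_natCast]

theorem readP_append_add {pre suf : List Bool} {z : ℤ} {i : ℕ}
    (hz : z ≡ pre.length [ZMOD (pre ++ suf).length]) (hi : i < suf.length) :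
    readP (pre ++ suf) (z + i) = suf.getD i false := by
  rw [readP_of_modEq (k := pre.length + i) (by simp; omega) (by push_cast; exact hz.add_right _),
    List.getD_append_right _ _ _ _ (by omega), Nat.add_sub_cancel_left]

theorem readP_append_sub_one {pre suf : List Bool} {z : ℤ}
    (hz : z ≡ pre.length [ZMOD (pre ++ suf).length]) :
    readP (pre ++ suf) (z - 1) = ((suf ++ pre).getLast?).getD false := by
  rcases pre.eq_nil_or_concat' with rfl | ⟨l, b, rfl⟩
  · rcases suf.eq_nil_or_concat' with rfl | ⟨s, c, rfl⟩
    · simp [readP]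
    · have hz' : z - 1 ≡ s.length [ZMOD (s ++ [c]).length] := by
        simpa [add_comm] using (hz.sub_right 1).trans (Int.add_modEq_right (a := -1)).symm
      rw [List.nil_append, readP_of_modEq (by simp) hz']
      simp
  · have hz' : z - 1 ≡ l.length [ZMOD (l ++ [b] ++ suf).length] := by
      simpa using hz.sub_right 1
    rw [readP_of_modEq (by simp) hz']
    simp

theorem readC_self_add_one {n : ℕ} {z : ℤ} (hz : z % ((n : ℤ) + 2) = 0) :
    readC n (z + 1) = true := by
  have : (z + 1) % ((n : ℤ) + 2) = 1 := by
    rw [← Int.emod_add_emod, hz, zero_add, Int.emod_eq_of_lt (by omega) (by omega)]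
  simp [readC, this]

theorem hStep_iterate_ten {P : List Bool} {n : ℕ} {pP pC pW : ℤ} {tp : ℤ → Bool}
    (hpred : readP P (pP - 1) = true) (hp0 : readP P pP = false)
    (hp1 : readP P (pP + 1) = false) (hp2 : readP P (pP + 2) = false)
    (hp3 : readP P (pP + 3) = true) (hc0 : readC n pC = false)
    (hc1 : readC n (pC + 1) = true) (hw : tp pW = true) :
    (hStep P n)^[10] ⟨0, pP, pC, pW, tp⟩ = ⟨0, pP, pC, pW, tp⟩ := by
  have rule3 : hStep P n ⟨0, pP, pC, pW, tp⟩ = ⟨1, pP + 1, pC, pW, tp⟩ := by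
    simp [hStep, hp0]
  have rule5 : hStep P n ⟨1, pP + 1, pC, pW, tp⟩ = ⟨1, pP + 2, pC + 1, pW, tp⟩ := by
    simp [hStep, hp1, hc0]; omega
  have rule7 : hStep P n ⟨1, pP + 2, pC + 1, pW, tp⟩ = ⟨2, pP + 3, pC, pW, tp⟩ := by
    simp [hStep, hp2, hc1]; omega
  have rule11 : hStep P n ⟨2, pP + 3, pC, pW, tp⟩ = ⟨3, pP + 2, pC + 1, pW, tp⟩ := by
    simp [hStep, hp3, hw]; omega
  have rule12 : ∀ t : ℤ, readP P t = false →
      hStep P n ⟨3, t, pC + 1, pW, tp⟩ = ⟨3, t - 1, pC + 1, pW, tp⟩ := fun t ht => by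
    simp [hStep, ht, hc1]
  have rule13 : hStep P n ⟨3, pP - 1, pC + 1, pW, tp⟩ = ⟨3, pP - 2, pC, pW, tp⟩ := by
    simp [hStep, hpred, hc1]; omega
  have rule14 : hStep P n ⟨3, pP - 2, pC, pW, tp⟩ = ⟨0, pP - 1, pC, pW, tp⟩ := by
    simp [hStep, hc0]; omega
  have rule2 : hStep P n ⟨0, pP - 1, pC, pW, tp⟩ = ⟨0, pP, pC, pW, tp⟩ := by
    simp [hStep, hpred, hw]
  simp only [Function.iterate_succ, Function.iterate_zero, Function.comp_apply, id_eq]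
  rw [rule3, rule5, rule7, rule11, rule12 _ hp2, show pP + 2 - 1 = pP + 1 by ring,
    rule12 _ hp1, add_sub_cancel_right, rule12 _ hp0, rule13, rule14, rule2]

theorem encInstr_J_self (n k : ℕ) : encInstr n k (WInstr.J k) = [false, false, false, true] := by
  simp [encInstr, jumpOffset]

theorem getLast?_encInstr (n k : ℕ) (i : WInstr) : (encInstr n k i).getLast? = some true := by
  cases i <;> simp [encInstr]

theorem List.getLast?_flatten_of_forall {α : Type*} {L : List (List α)} {a : α} (hL : L ≠ [])
    (h : ∀ l ∈ L, l.getLast? = some a) : L.flatten.getLast? = some a := by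
  obtain ⟨L', l, rfl⟩ := L.eq_nil_or_concat'.resolve_left hL
  simp [h l (by simp)]

theorem stmt12_general (W : List WInstr)
    (hc : HCfg) (h1 : hc.state = 0)
    (h2 : hc.pP % ((encProg W).length : ℤ) = (pStart W W.length : ℤ))
    (h3 : hc.pC % ((W.length : ℤ) + 2) = 0)
    (h4 : hc.tapeW hc.pW = true) :
    (hStep (encProg W) W.length)^[10] hc = hc ∧
    ∀ j : ℕ, (hStep (encProg W) W.length)^[10 * j] hc = hc := by
  obtain ⟨st, pP, pC, pW, tp⟩ := hc
  dsimp only at h1 h2 h3 h4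
  subst h1
  set body := ((List.range W.length).map
    (fun k => encInstr W.length k (W.getD k WInstr.M))).flatten
  have hP : encProg W = body ++ [false, false, false, true] := by
    rw [encProg, encInstr_J_self]
  have hstart : pStart W W.length = body.length := rfl
  have hz : pP ≡ body.length [ZMOD (body ++ [false, false, false, true]).length] := by
    rw [← hP, Int.ModEq, h2, hstart, Int.emod_eq_of_lt (by omega) (by rw [hP]; simp)]
  have hpred : readP (encProg W) (pP - 1) = true := by
    rw [hP, readP_append_sub_one hz, ← encInstr_J_self W.length W.length, ← List.flatten_cons,
      List.getLast?_flatten_of_forall (List.cons_ne_nil _ _)]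
    · rfl
    · simp only [List.mem_cons, List.mem_map]
      rintro l (rfl | ⟨k, -, rfl⟩) <;> exact getLast?_encInstr _ _ _
  have hread (i : ℕ) (hi : i < 4) :
      readP (encProg W) (pP + i) = [false, false, false, true].getD i false := by
    rw [hP]; exact readP_append_add hz hi
  have loop := hStep_iterate_ten hpred (by simpa using hread 0) (by simpa using hread 1)
    (by simpa using hread 2) (by simpa using hread 3) (by simp [readC, h3])
    (readC_self_add_one h3) h4
  exact ⟨loop, fun j => by rw [Function.iterate_mul]; exact Function.iterate_fixed loop j⟩

/-- When Hasenjaeger's machine reaches the configuration encoding the halting of the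
simulated Wang B machine — state `q1`, `P`-head on the first bit of the final encoded
instruction `⟨J(n)⟩ = 0001`, `C`-head on the unique `0`, work-tape head reading
`1` — then after exactly 10 steps it returns to the same configuration; hence it loops
forever with unchanged tape contents. -/
theorem stmt12 (W : List WInstr) (hW : W ≠ [])
    (hc : HCfg) (h1 : hc.state = 0)
    (h2 : hc.pP % ((encProg W).length : ℤ) = (pStart W W.length : ℤ))
    (h3 : hc.pC % ((W.length : ℤ) + 2) = 0)
    (h4 : hc.tapeW hc.pW = true) :
    (hStep (encProg W) W.length)^[10] hc = hc ∧
    ∀ j : ℕ, (hStep (encProg W) W.length)^[10 * j] hc = hc :=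
  stmt12_general W hc h1 h2 h3 h4
end

section
/- In the modification of the Wang B machine program to satisfy Hooper's restrictions, replacing every instruction I_k = M by the sequence J(k+4), R, L, M, R, L preserves the machine's input/output behaviour: on any tape, the modified sequence has the same effect on the tape and relative head position as the single M instruction (setting the current cell to 1 and leaving the head in place), and control exits at the instruction following the sequence. -/
/-
When the current cell already holds 1, the jump `J(k+4)` skips the `M`, and the remaining
`R, L` pair only moves the head out and back; since writing 1 on a cell holding 1 leaves the
tape unchanged, this is the effect of `M`. When the cell holds 0, the jump falls through and
the sequence runs `R, L`, then `M` on the original cell, then `R, L` again.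
-/

section

variable {P : List WInstr} {i : ℕ} {p : ℤ} {t : ℤ → Bool}

theorem wStep_of_L (h : P[i]? = some WInstr.L) : wStep P ⟨i, p, t⟩ = ⟨i + 1, p - 1, t⟩ := by
  simp [wStep, h]

theorem wStep_of_R (h : P[i]? = some WInstr.R) : wStep P ⟨i, p, t⟩ = ⟨i + 1, p + 1, t⟩ := by
  simp [wStep, h]

theorem wStep_of_M (h : P[i]? = some WInstr.M) :
    wStep P ⟨i, p, t⟩ = ⟨i + 1, p, Function.update t p true⟩ := by
  simp [wStep, h]

theorem wStep_of_J_of_true {x : ℕ} (h : P[i]? = some (WInstr.J x)) (ht : t p = true) :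
    wStep P ⟨i, p, t⟩ = ⟨x, p, t⟩ := by
  simp [wStep, h, ht]

theorem wStep_of_J_of_false {x : ℕ} (h : P[i]? = some (WInstr.J x)) (ht : t p = false) :
    wStep P ⟨i, p, t⟩ = ⟨i + 1, p, t⟩ := by
  simp [wStep, h, ht]

theorem iterate_wStep_R_L (hR : P[i]? = some WInstr.R) (hL : P[i + 1]? = some WInstr.L) :
    (wStep P)^[2] ⟨i, p, t⟩ = ⟨i + 2, p, t⟩ := by
  rw [Function.iterate_succ_apply', Function.iterate_one, wStep_of_R hR, wStep_of_L hL,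
    add_sub_cancel_right]

end

/-- Hooper's restriction 3: replacing an instruction `I_k = M` by the sequence
`J(k+4), R, L, M, R, L` preserves behaviour: from instruction pointer `k`, in at most
6 steps the machine reaches instruction pointer `k + 6` with the current cell set to
1 and the head where it started — exactly the effect of a single `M` followed by
moving control to the next instruction. -/
theorem stmt13 (P : List WInstr) (k : ℕ)
    (h0 : P[k]? = some (WInstr.J (k + 4)))
    (h1 : P[k + 1]? = some WInstr.R)
    (h2 : P[k + 2]? = some WInstr.L)
    (h3 : P[k + 3]? = some WInstr.M)
    (h4 : P[k + 4]? = some WInstr.R)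
    (h5 : P[k + 5]? = some WInstr.L)
    (c : WCfg) (hip : c.ip = k) :
    ∃ s ≤ 6, (wStep P)^[s] c =
      ⟨k + 6, c.pos, Function.update c.tape c.pos true⟩ := by
  obtain ⟨k, p, t⟩ := c
  dsimp only at hip ⊢
  subst hip
  cases ht : t p
  · refine ⟨6, le_rfl, ?_⟩
    calc (wStep P)^[6] ⟨k, p, t⟩
        = (wStep P)^[5] ⟨k + 1, p, t⟩ := by
          rw [Function.iterate_succ_apply, wStep_of_J_of_false h0 ht]
      _ = (wStep P)^[3] ⟨k + 3, p, t⟩ := by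
          rw [Function.iterate_add_apply _ 3 2, iterate_wStep_R_L h1 h2]
      _ = (wStep P)^[2] ⟨k + 4, p, Function.update t p true⟩ := by
          rw [Function.iterate_succ_apply, wStep_of_M h3]
      _ = ⟨k + 6, p, Function.update t p true⟩ := iterate_wStep_R_L h4 h5
  · refine ⟨3, by norm_num, ?_⟩
    calc (wStep P)^[3] ⟨k, p, t⟩
        = (wStep P)^[2] ⟨k + 4, p, t⟩ := by
          rw [Function.iterate_succ_apply, wStep_of_J_of_true h0 ht]
      _ = ⟨k + 6, p, t⟩ := iterate_wStep_R_L h4 h5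
      _ = ⟨k + 6, p, Function.update t p true⟩ := by
          rw [Function.update_eq_self_iff.mpr ht.symm]
end
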